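/- Let G be a finite group, k a field of characteristic p > 0, and b a block idempotent of kG. For p-subgroups Q ≤ P of G and block idempotents f of kC_G(Q), e of kC_G(P): if there exists a primitive idempotent i of (kG)^P with Br_P(i)e ≠ 0 and Br_Q(i)f ≠ 0, then for every primitive idempotent j of (kG)^P with Br_P(j)e ≠ 0 one has Br_Q(j)f ≠ 0 (i.e., conditions (vi) and (iv) of the containment of Brauer pairs are equivalent, given the existence and uniqueness of f' with (Q,f') ≤ (P,e)). -/

import Mathlib

/-- Conjugation by `x ∈ G` on the group algebra. -/
noncomputable def gAct {k G : Type*} [Field k] [Group G] (x : G) (a : MonoidAlgebra k G) :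
    MonoidAlgebra k G :=
  MonoidAlgebra.ofCoeff (Finsupp.mapDomain (fun g => x * g * x⁻¹) a.coeff)

/-- The Brauer homomorphism with respect to `P`: projection of `kG` onto the coefficients
supported on the centralizer `C_G(P)`; its image is identified with `kC_G(P)`. -/
noncomputable def Br {k G : Type*} [Field k] [Group G] (P : Subgroup G)
    (a : MonoidAlgebra k G) : MonoidAlgebra k G :=
  @Finsupp.filter G k _ (· ∈ Subgroup.centralizer (P : Set G)) (Classical.decPred _) a.coeff |> MonoidAlgebra.ofCoeff

/-- `a ∈ kG` is supported in the subgroup `H`; such elements form a subalgebra canonically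
isomorphic to `kH`. -/
def SuppIn {k G : Type*} [Field k] [Group G] (H : Subgroup G) (a : MonoidAlgebra k G) : Prop :=
  ∀ g : G, a.coeff g ≠ 0 → g ∈ H

/-- `e` is a block idempotent of `kH` (identified with the elements of `kG` supported in `H`):
`e` is supported in `H`, central in `kH`, a nonzero idempotent, and primitive among central
idempotents of `kH`. -/
def IsBlockOf {k G : Type*} [Field k] [Group G] (H : Subgroup G) (e : MonoidAlgebra k G) : Prop :=
  SuppIn H e ∧ (∀ a : MonoidAlgebra k G, SuppIn H a → a * e = e * a) ∧
    IsIdempotentElem e ∧ e ≠ 0 ∧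
    ∀ c₁ c₂ : MonoidAlgebra k G, SuppIn H c₁ → SuppIn H c₂ →
      (∀ a, SuppIn H a → a * c₁ = c₁ * a) → (∀ a, SuppIn H a → a * c₂ = c₂ * a) →
      IsIdempotentElem c₁ → IsIdempotentElem c₂ → c₁ * c₂ = 0 → e = c₁ + c₂ →
        c₁ = 0 ∨ c₂ = 0

/-- `i` is a primitive idempotent of the fixed-point algebra `(kG)^P`. -/
def IsPrimIdemFixed {k G : Type*} [Field k] [Group G] (P : Subgroup G)
    (i : MonoidAlgebra k G) : Prop :=
  (∀ x ∈ P, gAct x i = i) ∧ IsIdempotentElem i ∧ i ≠ 0 ∧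
    ∀ j₁ j₂ : MonoidAlgebra k G, (∀ x ∈ P, gAct x j₁ = j₁) → (∀ x ∈ P, gAct x j₂ = j₂) →
      IsIdempotentElem j₁ → IsIdempotentElem j₂ → j₁ * j₂ = 0 → j₂ * j₁ = 0 → i = j₁ + j₂ →
        j₁ = 0 ∨ j₂ = 0

/-- The containment `(Q,f) ≤ (P,e)` of `kG`-Brauer pairs: `Q ≤ P` and every primitive idempotent
`i` of `(kG)^P` associated to `(P,e)` (i.e. `e·Br_P(i) = Br_P(i) ≠ 0`) is associated to `(Q,f)`. -/
def BrauerLE {k G : Type*} [Field k] [Group G] (Q : Subgroup G) (f : MonoidAlgebra k G)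
    (P : Subgroup G) (e : MonoidAlgebra k G) : Prop :=
  Q ≤ P ∧ ∀ i : MonoidAlgebra k G, IsPrimIdemFixed P i →
    (e * Br P i = Br P i ∧ Br P i ≠ 0) → (f * Br Q i = Br Q i ∧ Br Q i ≠ 0)

/-!
The Brauer homomorphism `Br_P` is multiplicative on `(kG)^P`: in the coefficient at
`g ∈ C_G(P)` of a product, the terms indexed by `h ∉ C_G(P)` fall into `P`-conjugacy orbits of
size a positive power of `p`, on which the summand is constant.

Let `i` be primitive in `(kG)^P` with `Br_P(i) e ≠ 0` and put `a = i e i`. By Fitting's lemma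
some polynomial `q` without constant term makes `q(a)` an idempotent of `i (kG)^P i` absorbing a
power of `a`. Primitivity of `i` leaves two cases: `q(a) = 0`, so that `a` is nilpotent, which is
impossible because `Br_P(a) = Br_P(i) e` is a nonzero idempotent; or `i = q(a)`, and then
`Br_P(i) = q(Br_P(i) e)` is absorbed by `e`. So every such `i` is associated to `(P, e)`, hence
`Br_Q(i)` is absorbed by the block `f'` with `(Q, f') ≤ (P, e)`. Distinct blocks of `kC_G(Q)` are
orthogonal, so the hypothesis on a single `i` forces `f = f'`.
-/

open MulAction MonoidAlgebra Polynomial Subgroup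

namespace IsPGroup

variable {p : ℕ} [Fact p.Prime] {H α R : Type*} [Group H] [MulAction H α] [Fintype α]
  [Semiring R] [CharP R p]

theorem sum_eq_zero_of_forall_mem_fixedPoints (hH : IsPGroup p H) {F : α → R}
    (hF : ∀ (h : H) x, F (h • x) = F x) (hfix : ∀ x ∈ fixedPoints H α, F x = 0) :
    ∑ x, F x = 0 := by
  classical
  rw [← (selfEquivSigmaOrbits H α).symm.sum_comp, Fintype.sum_sigma]
  refine Finset.sum_eq_zero fun ω _ => ?_
  have hconst : ∀ y : orbit H ω.out, F y = F ω.out := fun ⟨_, h, rfl⟩ => hF h _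
  change ∑ y : orbit H ω.out, F y = 0
  rw [Fintype.sum_congr _ _ hconst, Finset.sum_const, Finset.card_univ]
  by_cases hx : ω.out ∈ fixedPoints H α
  · rw [hfix _ hx, smul_zero]
  obtain ⟨n, hn⟩ := hH.card_orbit ω.out
  have hn0 : n ≠ 0 := by
    rintro rfl
    exact hx (mem_fixedPoints_iff_card_orbit_eq_one.mpr
      (by rw [← Nat.card_eq_fintype_card, hn, pow_zero]))
  rw [nsmul_eq_mul, ← Nat.card_eq_fintype_card, hn, Nat.cast_pow, CharP.cast_eq_zero,
    zero_pow hn0, zero_mul]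

theorem sum_eq_sum_fixedPoints (hH : IsPGroup p H) [DecidablePred (· ∈ fixedPoints H α)]
    {F : α → R} (hF : ∀ (h : H) x, F (h • x) = F x) :
    ∑ x, F x = ∑ x with x ∈ fixedPoints H α, F x := by
  have hfix : ∀ (h : H) x, h • x ∈ fixedPoints H α ↔ x ∈ fixedPoints H α := fun h x =>
    ⟨fun hx => by rw [← inv_smul_smul h x, hx h⁻¹]; exact hx, fun hx => (hx h).symm ▸ hx⟩
  have hnonfixed : ∑ x with x ∉ fixedPoints H α, F x = 0 := by
    rw [Finset.sum_filter]
    refine hH.sum_eq_zero_of_forall_mem_fixedPoints (fun h x => ?_)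
      fun x hx => if_neg (not_not.mpr hx)
    simp only [hfix, hF]
  rw [← Finset.sum_filter_add_sum_filter_not Finset.univ (· ∈ fixedPoints H α), hnonfixed,
    add_zero]

end IsPGroup

lemma mem_fixedPoints_map_toConjAct_iff {G : Type*} [Group G] {P : Subgroup G} {g : G} :
    g ∈ fixedPoints (P.map (ConjAct.toConjAct : G ≃* ConjAct G).toMonoidHom) G ↔
      g ∈ centralizer (P : Set G) := by
  rw [mem_fixedPoints, mem_centralizer_iff, Subtype.forall]
  simp only [mk_smul, mem_map_equiv, ConjAct.smul_def, mul_inv_eq_iff_eq_mul]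
  rfl

namespace Polynomial

variable {k A : Type*} [Field k] [Ring A] [Algebra k A]

lemma aeval_mul_of_mul_eq {q : k[X]} (hq : q.coeff 0 = 0) {x y : A} (hxy : x * y = x) :
    aeval x q * y = aeval x q := by
  obtain ⟨r, rfl⟩ := X_dvd_iff.mpr hq
  rw [mul_comm, map_mul, aeval_X, mul_assoc, hxy]

lemma mul_aeval_of_mul_eq {q : k[X]} (hq : q.coeff 0 = 0) {x y : A} (hyx : y * x = x) :
    y * aeval x q = aeval x q := by
  obtain ⟨r, rfl⟩ := X_dvd_iff.mpr hq
  rw [map_mul, aeval_X, ← mul_assoc, hyx]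

/-- Fitting's lemma: write the minimal polynomial as `X ^ m * g` with `X ∤ g` and take
`u * X ^ (m + 1)` from a Bézout identity `v * g + u * X ^ (m + 1) = 1`. -/
theorem exists_isIdempotentElem_aeval_mul_pow_eq [Module.Finite k A] (a : A) :
    ∃ q : k[X], q.coeff 0 = 0 ∧ IsIdempotentElem (aeval a q) ∧
      ∃ n, aeval a q * a ^ n = a ^ n := by
  obtain ⟨g, hμ, hXg⟩ := exists_eq_pow_rootMultiplicity_mul_and_not_dvd (minpoly k a)
    (minpoly.ne_zero (IsIntegral.of_finite k a)) 0
  set m := rootMultiplicity 0 (minpoly k a)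
  simp only [map_zero, sub_zero] at hμ hXg
  obtain ⟨v, u, huv⟩ := irreducible_X.coprime_pow_of_not_dvd (m + 1) hXg
  have hann : aeval a (X * (X ^ m * g)) = 0 := by
    rw [map_mul, ← hμ, minpoly.aeval, mul_zero]
  refine ⟨u * X ^ (m + 1), by simp, ?_, m + 1, ?_⟩
  · have h : u * X ^ (m + 1) * (u * X ^ (m + 1)) =
        u * X ^ (m + 1) - u * v * (X * (X ^ m * g)) := by
      linear_combination (u * X ^ (m + 1)) * huv
    rw [IsIdempotentElem, ← map_mul, h, map_sub, map_mul _ (u * v), hann, mul_zero, sub_zero]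
  · have h : u * X ^ (m + 1) * X ^ (m + 1) = X ^ (m + 1) - v * (X * (X ^ m * g)) := by
      linear_combination X ^ (m + 1) * huv
    rw [← aeval_X_pow (R := k) (x := a), ← map_mul, h, map_sub, map_mul _ v, hann, mul_zero,
      sub_zero]

theorem isNilpotent_or_exists_eq_aeval [Module.Finite k A] {S : Subalgebra k A} {i a : A}
    (hiS : i ∈ S) (hi : IsIdempotentElem i)
    (hprim : ∀ j₁ ∈ S, ∀ j₂ ∈ S, IsIdempotentElem j₁ → IsIdempotentElem j₂ →
      j₁ * j₂ = 0 → j₂ * j₁ = 0 → i = j₁ + j₂ → j₁ = 0 ∨ j₂ = 0)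
    (haS : a ∈ S) (hia : i * a = a) (hai : a * i = a) :
    IsNilpotent a ∨ ∃ q : k[X], q.coeff 0 = 0 ∧ i = aeval a q := by
  obtain ⟨q, hq, hc, n, hcn⟩ := exists_isIdempotentElem_aeval_mul_pow_eq (k := k) a
  have hic : i * aeval a q = aeval a q := mul_aeval_of_mul_eq hq hia
  have hci : aeval a q * i = aeval a q := aeval_mul_of_mul_eq hq hai
  have hcS : aeval a q ∈ S := coe_aeval_mk_apply (p := q) (h := haS) ▸ SetLike.coe_mem _
  rcases hprim _ hcS _ (S.sub_mem hiS hcS) hc (hc.sub hi hci hic)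
    (by rw [mul_sub, hci, hc.eq, sub_self]) (by rw [sub_mul, hic, hc.eq, sub_self])
    (add_sub_cancel _ _).symm with h | h
  · exact .inl ⟨n, by rw [← hcn, h, zero_mul]⟩
  · exact .inr ⟨q, hq, sub_eq_zero.mp h⟩

end Polynomial

section GroupAlgebra

variable {k G : Type*} [Field k] [Group G]

lemma suppIn_one (H : Subgroup G) : SuppIn H (1 : MonoidAlgebra k G) := by
  intro g hg
  rw [Finset.mem_one.mp (support_coeff_one_subset (Finsupp.mem_support_iff.mpr hg))]
  exact H.one_mem

lemma SuppIn.mul {H : Subgroup G} {a b : MonoidAlgebra k G} (ha : SuppIn H a)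
    (hb : SuppIn H b) : SuppIn H (a * b) := by
  classical
  intro g hg
  obtain ⟨x, hx, y, hy, rfl⟩ := Finset.mem_mul.mp
    (support_coeff_mul_subset a b (Finsupp.mem_support_iff.mpr hg))
  exact H.mul_mem (ha x (Finsupp.mem_support_iff.mp hx)) (hb y (Finsupp.mem_support_iff.mp hy))

lemma SuppIn.sub {H : Subgroup G} {a b : MonoidAlgebra k G} (ha : SuppIn H a)
    (hb : SuppIn H b) : SuppIn H (a - b) := by
  intro g hg
  by_cases hag : a.coeff g = 0
  · exact hb g fun hbg => hg (by simp [hag, hbg])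
  · exact ha g hag

lemma IsBlockOf.mul_eq_zero_or_mul_eq_self {H : Subgroup G} {f c : MonoidAlgebra k G}
    (hf : IsBlockOf H f) (hcH : SuppIn H c) (hc : ∀ a, SuppIn H a → a * c = c * a)
    (hc_idem : IsIdempotentElem c) : f * c = 0 ∨ f * c = f := by
  obtain ⟨hfH, hf, hf_idem, -, hprim⟩ := hf
  have hfc : c * f = f * c := hf c hcH
  have hcentral : ∀ a, SuppIn H a → a * (f * c) = f * c * a := fun a ha => by
    rw [← mul_assoc, hf a ha, mul_assoc, hc a ha, mul_assoc]
  have hfc_idem : IsIdempotentElem (f * c) := by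
    rw [IsIdempotentElem, mul_assoc, ← mul_assoc c, hfc, mul_assoc, hc_idem.eq, ← mul_assoc,
      hf_idem.eq]
  have hmul : f * c * f = f * c := by rw [mul_assoc, hfc, ← mul_assoc, hf_idem.eq]
  rcases hprim (f * c) (f - f * c) (hfH.mul hcH) (hfH.sub (hfH.mul hcH)) hcentral
      (fun a ha => by rw [mul_sub, sub_mul, hf a ha, hcentral a ha]) hfc_idem
      (hfc_idem.sub hf_idem hmul (by rw [← mul_assoc, hf_idem.eq]))
      (by rw [mul_sub, hmul, hfc_idem.eq, sub_self]) (add_sub_cancel _ _).symm with h | h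
  · exact .inl h
  · exact .inr (sub_eq_zero.mp h).symm

lemma IsBlockOf.eq_or_mul_eq_zero {H : Subgroup G} {f f' : MonoidAlgebra k G}
    (hf : IsBlockOf H f) (hf' : IsBlockOf H f') : f = f' ∨ f * f' = 0 := by
  have hcomm : f' * f = f * f' := hf.2.1 f' hf'.1
  rcases hf.mul_eq_zero_or_mul_eq_self hf'.1 hf'.2.1 hf'.2.2.1 with h | h
  · exact .inr h
  rcases hf'.mul_eq_zero_or_mul_eq_self hf.1 hf.2.1 hf.2.2.1 with h' | h'
  · exact .inr (hcomm ▸ h')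
  · exact .inl (h.symm.trans (hcomm ▸ h'))

variable (k) in
noncomputable def fixedSubalgebra (P : Subgroup G) : Subalgebra k (MonoidAlgebra k G) :=
  ⨅ x ∈ P, AlgHom.equalizer (mapDomainAlgHom k k (MulAut.conj x).toMonoidHom) (AlgHom.id k _)

lemma mem_fixedSubalgebra {P : Subgroup G} {a : MonoidAlgebra k G} :
    a ∈ fixedSubalgebra k P ↔ ∀ x ∈ P, gAct x a = a := by
  simp only [fixedSubalgebra, Algebra.mem_iInf, AlgHom.mem_equalizer, AlgHom.id_apply]
  rfl

lemma coeff_gAct_conj (x : G) (a : MonoidAlgebra k G) (g : G) :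
    (gAct x a).coeff (x * g * x⁻¹) = a.coeff g :=
  Finsupp.mapDomain_apply (fun g₁ g₂ h => by simpa using h) _ _

lemma coeff_conj_of_mem_fixedSubalgebra {P : Subgroup G} {a : MonoidAlgebra k G}
    (ha : a ∈ fixedSubalgebra k P) {x : G} (hx : x ∈ P) (g : G) :
    a.coeff (x * g * x⁻¹) = a.coeff g := by
  conv_lhs => rw [← mem_fixedSubalgebra.mp ha x hx]
  exact coeff_gAct_conj x a g

lemma mem_fixedSubalgebra_of_suppIn {P : Subgroup G} {a : MonoidAlgebra k G}
    (ha : SuppIn (centralizer (P : Set G)) a) : a ∈ fixedSubalgebra k P := by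
  refine mem_fixedSubalgebra.mpr fun x hx => ?_
  refine congrArg ofCoeff ((Finsupp.mapDomain_congr fun g hg => ?_).trans Finsupp.mapDomain_id)
  rw [mem_centralizer_iff.mp (ha g (Finsupp.mem_support_iff.mp hg)) x hx, mul_inv_cancel_right]
  rfl

lemma coeff_Br (P : Subgroup G) (a : MonoidAlgebra k G) (g : G)
    [Decidable (g ∈ centralizer (P : Set G))] :
    (Br P a).coeff g = if g ∈ centralizer (P : Set G) then a.coeff g else 0 := by
  simp only [Br, coeff_ofCoeff, Finsupp.filter_apply]
  congr

lemma suppIn_Br (P : Subgroup G) (a : MonoidAlgebra k G) :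
    SuppIn (centralizer (P : Set G)) (Br P a) := by
  classical
  intro g hg
  by_contra hgC
  exact hg (by rw [coeff_Br, if_neg hgC])

lemma Br_eq_self_of_suppIn {P : Subgroup G} {a : MonoidAlgebra k G}
    (ha : SuppIn (centralizer (P : Set G)) a) : Br P a = a := by
  classical
  ext g
  rw [coeff_Br]
  split_ifs with hg
  · rfl
  · exact (not_imp_comm.mp (ha g) hg).symm

variable (k) in
noncomputable def brauerLinearMap (P : Subgroup G) :
    MonoidAlgebra k G →ₗ[k] MonoidAlgebra k G where
  toFun := Br P
  map_add' a b := by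
    classical
    ext g
    simp only [MonoidAlgebra.coeff_add, Finsupp.add_apply, coeff_Br]
    split_ifs <;> simp
  map_smul' t a := by
    classical
    ext g
    simp only [MonoidAlgebra.coeff_smul, Finsupp.smul_apply, coeff_Br]
    split_ifs <;> simp

end GroupAlgebra

section BrauerHom

variable {k G : Type*} [Field k] [Group G] [Fintype G] {p : ℕ} [Fact p.Prime] [CharP k p]
  {P : Subgroup G}

lemma Br_mul (hP : IsPGroup p P) {a b : MonoidAlgebra k G} (ha : a ∈ fixedSubalgebra k P)
    (hb : b ∈ fixedSubalgebra k P) : Br P (a * b) = Br P a * Br P b := by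
  classical
  ext g
  by_cases hg : g ∈ centralizer (P : Set G)
  · have hF : ∀ (z : P.map (ConjAct.toConjAct : G ≃* ConjAct G).toMonoidHom) (h : G),
        a.coeff (z • h) * b.coeff ((z • h)⁻¹ * g) = a.coeff h * b.coeff (h⁻¹ * g) := by
      rintro ⟨c, hc⟩ h
      obtain hx : ConjAct.ofConjAct c ∈ P := mem_map_equiv.mp hc
      set x := ConjAct.ofConjAct c
      have hxg : x⁻¹ * g = g * x⁻¹ := by
        rw [inv_mul_eq_iff_eq_mul, ← mul_assoc, mem_centralizer_iff.mp hg x hx,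
          mul_inv_cancel_right]
      have hconj : (x * h * x⁻¹)⁻¹ * g = x * (h⁻¹ * g) * x⁻¹ := by
        calc (x * h * x⁻¹)⁻¹ * g = x * h⁻¹ * (x⁻¹ * g) := by group
          _ = x * (h⁻¹ * g) * x⁻¹ := by rw [hxg]; group
      rw [mk_smul, ConjAct.smul_def, hconj, coeff_conj_of_mem_fixedSubalgebra ha hx,
        coeff_conj_of_mem_fixedSubalgebra hb hx]
    rw [coeff_Br, if_pos hg, coeff_mul_apply_left, coeff_mul_apply_left,
      Finsupp.sum_fintype _ _ (by simp), Finsupp.sum_fintype _ _ (by simp),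
      (hP.map _).sum_eq_sum_fixedPoints hF, Finset.sum_filter]
    refine Finset.sum_congr rfl fun h _ => ?_
    by_cases hh : h ∈ centralizer (P : Set G)
    · rw [if_pos (mem_fixedPoints_map_toConjAct_iff.mpr hh), coeff_Br, coeff_Br, if_pos hh,
        if_pos (mul_mem (inv_mem hh) hg)]
    · rw [if_neg (mt mem_fixedPoints_map_toConjAct_iff.mp hh), coeff_Br, if_neg hh, zero_mul]
  · rw [coeff_Br, if_neg hg]
    exact (not_imp_comm.mp ((suppIn_Br P a).mul (suppIn_Br P b) g) hg).symm

variable (k) in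
noncomputable def brauerHom (hP : IsPGroup p P) : fixedSubalgebra k P →ₐ[k] MonoidAlgebra k G :=
  AlgHom.ofLinearMap (brauerLinearMap k P ∘ₗ (fixedSubalgebra k P).val.toLinearMap)
    (Br_eq_self_of_suppIn (suppIn_one _)) fun a b => Br_mul hP a.2 b.2

lemma Br_pow (hP : IsPGroup p P) {a : MonoidAlgebra k G} (ha : a ∈ fixedSubalgebra k P)
    (n : ℕ) : Br P (a ^ n) = Br P a ^ n :=
  map_pow (brauerHom k hP) ⟨a, ha⟩ n

lemma Br_aeval (hP : IsPGroup p P) {a : MonoidAlgebra k G} (ha : a ∈ fixedSubalgebra k P)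
    (q : k[X]) : Br P (aeval a q) = aeval (Br P a) q := by
  rw [← coe_aeval_mk_apply (h := ha)]
  exact (aeval_algHom_apply (brauerHom k hP) ⟨a, ha⟩ q).symm

theorem Br_mul_eq_self_of_mul_ne_zero (hP : IsPGroup p P) {e i : MonoidAlgebra k G}
    (he : IsBlockOf (centralizer (P : Set G)) e) (hi : IsPrimIdemFixed P i)
    (hne : Br P i * e ≠ 0) : Br P i * e = Br P i := by
  obtain ⟨heC, he_central, he_idem, -, -⟩ := he
  obtain ⟨hiP, hi_idem, -, hprim⟩ := hi
  set S := fixedSubalgebra k P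
  have hiS : i ∈ S := mem_fixedSubalgebra.mpr hiP
  have heS : e ∈ S := mem_fixedSubalgebra_of_suppIn heC
  have haS : i * e * i ∈ S := S.mul_mem (S.mul_mem hiS heS) hiS
  have hcomm : Br P i * e = e * Br P i := he_central _ (suppIn_Br P i)
  have hBri : Br P i * Br P i = Br P i := by rw [← Br_mul hP hiS hiS, hi_idem.eq]
  have hBra : Br P (i * e * i) = Br P i * e := by
    rw [Br_mul hP (S.mul_mem hiS heS) hiS, Br_mul hP hiS heS, Br_eq_self_of_suppIn heC,
      mul_assoc, ← hcomm, ← mul_assoc, hBri]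
  have hēe : Br P i * e * e = Br P i * e := by rw [mul_assoc, he_idem.eq]
  have hē_idem : IsIdempotentElem (Br P i * e) := by
    rw [IsIdempotentElem, mul_assoc, ← mul_assoc e, ← hcomm, ← mul_assoc, ← mul_assoc, hBri, hēe]
  rcases isNilpotent_or_exists_eq_aeval hiS hi_idem
      (fun j₁ h₁ j₂ h₂ => hprim j₁ j₂ (mem_fixedSubalgebra.mp h₁) (mem_fixedSubalgebra.mp h₂))
      haS (by rw [← mul_assoc, ← mul_assoc, hi_idem.eq])
      (by rw [mul_assoc, hi_idem.eq]) with hnil | ⟨q, hq, hi_eq⟩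
  · obtain ⟨n, hn⟩ := hnil
    refine absurd (hē_idem.eq_zero_of_isNilpotent ⟨n, ?_⟩) hne
    rw [← hBra, ← Br_pow hP haS, hn]
    exact map_zero (brauerLinearMap k P)
  · have hBri_eq : Br P i = aeval (Br P i * e) q := by
      conv_lhs => rw [hi_eq]
      rw [Br_aeval hP haS, hBra]
    rw [hBri_eq]
    exact aeval_mul_of_mul_eq hq hēe

end BrauerHom

theorem brauer_pair_condition_vi_implies_iv_general
    (p : ℕ) [Fact p.Prime] (k : Type*) [Field k] [CharP k p]
    (G : Type*) [Group G] [Fintype G]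
    (Q P : Subgroup G) (hP : IsPGroup p ↥P)
    (f : MonoidAlgebra k G) (hf : IsBlockOf (Subgroup.centralizer (Q : Set G)) f)
    (e : MonoidAlgebra k G) (he : IsBlockOf (Subgroup.centralizer (P : Set G)) e)
    (huniq : ∃! f' : MonoidAlgebra k G,
      IsBlockOf (Subgroup.centralizer (Q : Set G)) f' ∧ BrauerLE Q f' P e)
    (hexists : ∃ i : MonoidAlgebra k G, IsPrimIdemFixed P i ∧
      Br P i * e ≠ 0 ∧ Br Q i * f ≠ 0) :
    ∀ j : MonoidAlgebra k G, IsPrimIdemFixed P j → Br P j * e ≠ 0 → Br Q j * f ≠ 0 := by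
  obtain ⟨i, hi, hie, hif⟩ := hexists
  obtain ⟨f', ⟨hf', -, hle⟩, -⟩ := huniq
  have hassoc : ∀ j, IsPrimIdemFixed P j → Br P j * e ≠ 0 →
      f' * Br Q j = Br Q j ∧ Br Q j ≠ 0 := fun j hj hje =>
    hle j hj ⟨(he.2.1 _ (suppIn_Br P j)).symm.trans (Br_mul_eq_self_of_mul_ne_zero hP he hj hje),
      fun h0 => hje (by rw [h0, zero_mul])⟩
  have hfBr : ∀ j, Br Q j * f = f * Br Q j := fun j => hf.2.1 _ (suppIn_Br Q j)
  rcases hf.eq_or_mul_eq_zero hf' with rfl | hff'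
  · intro j hj hje
    rw [hfBr, (hassoc j hj hje).1]
    exact (hassoc j hj hje).2
  · refine absurd ?_ hif
    rw [hfBr, ← (hassoc i hi hie).1, ← mul_assoc, hff', zero_mul]

/-- Let `Q ≤ P` be `p`-subgroups of `G`, `e` a block idempotent of `kC_G(P)` and
`f` a block idempotent of `kC_G(Q)`. Assume (as given by the uniqueness theorem for Brauer pairs)
that there is a unique block idempotent `f'` of `kC_G(Q)` with `(Q,f') ≤ (P,e)`. If some primitive
idempotent `i` of `(kG)^P` satisfies `Br_P(i)e ≠ 0` and `Br_Q(i)f ≠ 0`, then every primitive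
idempotent `j` of `(kG)^P` with `Br_P(j)e ≠ 0` satisfies `Br_Q(j)f ≠ 0`. -/
theorem brauer_pair_condition_vi_implies_iv
    (p : ℕ) [Fact p.Prime] (k : Type*) [Field k] [CharP k p]
    (G : Type*) [Group G] [Fintype G]
    (b : MonoidAlgebra k G) (hb : IsBlockOf (⊤ : Subgroup G) b)
    (Q P : Subgroup G) (hQP : Q ≤ P) (hQ : IsPGroup p ↥Q) (hP : IsPGroup p ↥P)
    (f : MonoidAlgebra k G) (hf : IsBlockOf (Subgroup.centralizer (Q : Set G)) f)
    (e : MonoidAlgebra k G) (he : IsBlockOf (Subgroup.centralizer (P : Set G)) e)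
    (huniq : ∃! f' : MonoidAlgebra k G,
      IsBlockOf (Subgroup.centralizer (Q : Set G)) f' ∧ BrauerLE Q f' P e)
    (hexists : ∃ i : MonoidAlgebra k G, IsPrimIdemFixed P i ∧
      Br P i * e ≠ 0 ∧ Br Q i * f ≠ 0) :
    ∀ j : MonoidAlgebra k G, IsPrimIdemFixed P j → Br P j * e ≠ 0 → Br Q j * f ≠ 0 :=
  brauer_pair_condition_vi_implies_iv_general p k G Q P hP f hf e he huniq hexists
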